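/- Let v ∈ ℓ²(ℕ; ℝ) and let α : ℕ → ℝ with α_j ≥ 0 for all j, and define u* ∈ ℓ²(ℕ; ℝ) by u*_j = S_{α_j}(v_j). If u ∈ ℓ²(ℕ; ℝ) satisfies (1/2)‖u − v‖² + Σ_{j=0}^∞ α_j |u_j| ≤ (1/2)‖w − v‖² + Σ_{j=0}^∞ α_j |w_j| for all w ∈ ℓ²(ℕ; ℝ) (penalty sums taken in [0, ∞]), then u = u*. -/

import Mathlib

/-! Writing `S = S_β(c)`, the identity `½(x-c)² - ½(S-c)² - ½(x-S)² = (x-S)(S-c)` and the fact that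
`c - S` is a subgradient of `β|·|` at `S` give `φ(S) + ½(x-S)² ≤ φ(x)` for the scalar objective
`φ(x) = ½(x-c)² + β|x|`, so `S` is its only minimizer. A minimizer `u` of the ℓ² functional
minimizes `φ` in each coordinate: changing `u` in coordinate `j` alone changes `‖· - v‖²` only in
the `j`-th square and the (finite) penalty only in the `j`-th term.
-/

/-- The soft thresholding (soft shrinkage) map with threshold `β`:
`S_β(x) = sign(x) * max (|x| - β) 0`, where `sign(0) = 0`. -/
noncomputable def softThreshold (β x : ℝ) : ℝ := Real.sign x * max (|x| - β) 0

open scoped ENNReal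

noncomputable section

def shrinkageObjective (β c x : ℝ) : ℝ := 1 / 2 * (x - c) ^ 2 + β * |x|

def sparsityObjective {ι : Type*} (α : ι → ℝ) (v w : lp (fun _ : ι => ℝ) 2) : ℝ≥0∞ :=
  ENNReal.ofReal ((1 / 2) * ‖w - v‖ ^ 2) + ∑' j, ENNReal.ofReal (α j * |w j|)

end

section Scalar

variable {β c : ℝ}

theorem softThreshold_of_abs_le (h : |c| ≤ β) : softThreshold β c = 0 := by
  rw [softThreshold, max_eq_right (by linarith), mul_zero]

theorem softThreshold_of_lt (h : β < c) (hβ : 0 ≤ β) : softThreshold β c = c - β := by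
  have hc : 0 < c := hβ.trans_lt h
  rw [softThreshold, Real.sign_of_pos hc, abs_of_pos hc, max_eq_left (by linarith), one_mul]

theorem softThreshold_of_lt_neg (h : c < -β) (hβ : 0 ≤ β) : softThreshold β c = c + β := by
  have hc : c < 0 := h.trans_le (by linarith)
  rw [softThreshold, Real.sign_of_neg hc, abs_of_neg hc, max_eq_left (by linarith)]
  ring

theorem sub_softThreshold_mul_le (hβ : 0 ≤ β) (x : ℝ) :
    (c - softThreshold β c) * (x - softThreshold β c) ≤ β * |x| - β * |softThreshold β c| := by
  rcases le_or_gt |c| β with hc | hc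
  · rw [softThreshold_of_abs_le hc]
    calc (c - 0) * (x - 0) ≤ |c| * |x| := by rw [sub_zero, sub_zero, ← abs_mul]; exact le_abs_self _
      _ ≤ β * |x| := by gcongr
      _ = β * |x| - β * |(0 : ℝ)| := by simp
  rcases lt_abs.mp hc with hc | hc
  · rw [softThreshold_of_lt hc hβ, abs_of_nonneg (by linarith : 0 ≤ c - β)]
    nlinarith [le_abs_self x]
  · rw [softThreshold_of_lt_neg (by linarith) hβ, abs_of_nonpos (by linarith : c + β ≤ 0)]
    nlinarith [neg_abs_le x]

theorem shrinkageObjective_softThreshold_add_le (hβ : 0 ≤ β) (x : ℝ) :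
    shrinkageObjective β c (softThreshold β c) + 1 / 2 * (x - softThreshold β c) ^ 2 ≤
      shrinkageObjective β c x := by
  unfold shrinkageObjective
  nlinarith [sub_softThreshold_mul_le (c := c) hβ x]

theorem eq_softThreshold_of_forall_le (hβ : 0 ≤ β) {y : ℝ}
    (hy : ∀ x, shrinkageObjective β c y ≤ shrinkageObjective β c x) :
    y = softThreshold β c := by
  have h := shrinkageObjective_softThreshold_add_le (c := c) hβ y
  have hsq : (y - softThreshold β c) ^ 2 = 0 :=
    le_antisymm (by linarith [hy (softThreshold β c)]) (sq_nonneg _)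
  exact sub_eq_zero.mp (pow_eq_zero_iff two_ne_zero |>.mp hsq)

end Scalar

theorem ENNReal.tsum_add_eq_tsum_add_of_eq_of_ne {ι : Type*} {f g : ι → ℝ≥0∞} (j : ι)
    (h : ∀ i, i ≠ j → f i = g i) : ∑' i, f i + g j = ∑' i, g i + f j := by
  classical
  have htail : (∑' i, if i = j then 0 else f i) = ∑' i, if i = j then 0 else g i :=
    tsum_congr fun i => by split_ifs with hi; exacts [rfl, h i hi]
  rw [ENNReal.tsum_eq_add_tsum_ite j, ENNReal.tsum_eq_add_tsum_ite (f := g) j, htail]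
  ring

namespace lp

variable {ι : Type*} [DecidableEq ι]

theorem norm_add_single_sq (f : lp (fun _ : ι => ℝ) 2) (i : ι) (t : ℝ) :
    ‖f + lp.single 2 i t‖ ^ 2 = ‖f‖ ^ 2 + 2 * (t * f i) + t ^ 2 := by
  rw [norm_add_sq_real, real_inner_comm, lp.inner_single_left, lp.norm_single (by norm_num),
    Real.norm_eq_abs, sq_abs, real_inner_eq_re_inner, RCLike.inner_apply, conj_trivial,
    RCLike.re_to_real]
  ring

end lp

section Sparsity

variable {ι : Type*} {α : ι → ℝ} {u v : lp (fun _ : ι => ℝ) 2}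

theorem tsum_ofReal_mul_abs_ne_top_of_forall_sparsityObjective_le
    (hu : ∀ w, sparsityObjective α v u ≤ sparsityObjective α v w) :
    ∑' i, ENNReal.ofReal (α i * |u i|) ≠ ∞ := by
  refine ne_top_of_le_ne_top ?_ (le_add_self.trans (hu 0))
  simp only [sparsityObjective, lp.coeFn_zero, Pi.zero_apply, abs_zero, mul_zero,
    ENNReal.ofReal_zero, tsum_zero, add_zero]
  exact ENNReal.ofReal_ne_top

theorem shrinkageObjective_le_of_forall_sparsityObjective_le [DecidableEq ι]
    (hα : ∀ j, 0 ≤ α j) (hu : ∀ w, sparsityObjective α v u ≤ sparsityObjective α v w)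
    (j : ι) (x : ℝ) :
    shrinkageObjective (α j) (v j) (u j) ≤ shrinkageObjective (α j) (v j) x := by
  set w := u + lp.single 2 j (x - u j)
  have hw_ne : ∀ i, i ≠ j → w i = u i := fun i hi => by simp [w, hi]
  have hwj : w j = x := by simp [w]
  have hnorm : ‖w - v‖ ^ 2 = ‖u - v‖ ^ 2 - (u j - v j) ^ 2 + (x - v j) ^ 2 := by
    rw [show w - v = u - v + lp.single 2 j (x - u j) from add_sub_right_comm _ _ _,
      lp.norm_add_single_sq]
    simp only [lp.coeFn_sub, Pi.sub_apply]
    ring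
  have hpen : ∑' i, ENNReal.ofReal (α i * |u i|) + ENNReal.ofReal (α j * |x|) =
      ∑' i, ENNReal.ofReal (α i * |w i|) + ENNReal.ofReal (α j * |u j|) := by
    have h := ENNReal.tsum_add_eq_tsum_add_of_eq_of_ne (f := fun i => ENNReal.ofReal (α i * |u i|))
      (g := fun i => ENNReal.ofReal (α i * |w i|)) j fun i hi => by simp only [hw_ne i hi]
    rwa [hwj] at h
  have hle : ENNReal.ofReal (1 / 2 * ‖u - v‖ ^ 2) + ENNReal.ofReal (α j * |u j|) ≤
      ENNReal.ofReal (1 / 2 * ‖w - v‖ ^ 2) + ENNReal.ofReal (α j * |x|) := by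
    refine (ENNReal.add_le_add_iff_left
      (tsum_ofReal_mul_abs_ne_top_of_forall_sparsityObjective_le hu)).mp ?_
    calc _ = sparsityObjective α v u + ENNReal.ofReal (α j * |u j|) := by
          rw [sparsityObjective]; ring
      _ ≤ sparsityObjective α v w + ENNReal.ofReal (α j * |u j|) := by gcongr; exact hu w
      _ = _ := by rw [sparsityObjective, add_assoc, ← hpen]; ring
  have hαj := hα j
  rw [← ENNReal.ofReal_add (by positivity) (by positivity),
    ← ENNReal.ofReal_add (by positivity) (by positivity),
    ENNReal.ofReal_le_ofReal_iff (by positivity)] at hle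
  unfold shrinkageObjective
  linarith

end Sparsity

/-- Uniqueness of the minimizer in `ℓ²(ℕ; ℝ)`: if `u ∈ ℓ²(ℕ; ℝ)` minimizes
`(1/2)‖· − v‖² + Σ_j α_j |·_j|` (penalty sums in `[0, ∞]`), then `u` is the
coefficientwise soft-thresholded sequence `u_j = S_{α_j}(v_j)`. -/
theorem softThreshold_lp_uniqueMinimizer (v : lp (fun _ : ℕ => ℝ) 2) (α : ℕ → ℝ)
    (hα : ∀ j, 0 ≤ α j) (u : lp (fun _ : ℕ => ℝ) 2)
    (hu : ∀ w : lp (fun _ : ℕ => ℝ) 2,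
      ENNReal.ofReal ((1 / 2) * ‖u - v‖ ^ 2) + ∑' j, ENNReal.ofReal (α j * |u j|) ≤
        ENNReal.ofReal ((1 / 2) * ‖w - v‖ ^ 2) + ∑' j, ENNReal.ofReal (α j * |w j|)) :
    ∀ j, u j = softThreshold (α j) (v j) := fun j =>
  eq_softThreshold_of_forall_le (hα j)
    (shrinkageObjective_le_of_forall_sparsityObjective_le hα hu j)
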